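/- arXiv:0707.3160 — 2 statements merged into one kernel-verified Lean document; each statement's English description precedes it below -/
import Mathlib

section
/- Let p₀ be a random variable with values in (0,1), not a.s. constant, with E[1/p₀] < ∞, and set ρ₀ = (1 - p₀)/p₀. If E[ρ₀] < 1, then the asymptotic velocity v = (1 - E[ρ₀])/(1 + E[ρ₀]) satisfies 0 < v < E[p₀ - q₀] = 2E[p₀] - 1, where q₀ = 1 - p₀. -/
/-!
Since `(1 - p) / p = p⁻¹ - 1`, we have `v = (2 - E[p⁻¹]) / E[p⁻¹]`, and `v < 2 E[p] - 1` reduces to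
`1 < E[p] E[p⁻¹]`, i.e. to the strict Jensen inequality `E[p]⁻¹ < E[p⁻¹]`. The latter follows by
integrating the tangent-line bound `x⁻¹ - (2 / m - x / m ^ 2) = (x - m) ^ 2 / (m ^ 2 x) ≥ 0` at
`m = E[p]`, whose right-hand side vanishes a.e. only if `p = m` a.e.
-/

open MeasureTheory

lemma inv_sub_tangent_eq (x m : ℝ) (hx : x ≠ 0) (hm : m ≠ 0) :
    x⁻¹ - (2 / m - x / m ^ 2) = (x - m) ^ 2 / (m ^ 2 * x) := by
  field_simp
  ring

section StrictJensen

variable {Ω : Type*} [MeasurableSpace Ω] {μ : Measure Ω} {f : Ω → ℝ}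

lemma integral_pos_of_ae_pos [NeZero μ] (hf : ∀ᵐ ω ∂μ, 0 < f ω) (hfi : Integrable f μ) :
    0 < ∫ ω, f ω ∂μ := by
  have hf0 : 0 ≤ᵐ[μ] f := hf.mono fun _ h => h.le
  refine (integral_nonneg_of_ae hf0).lt_of_ne fun h => ?_
  obtain ⟨ω, hpos, hzero⟩ := (hf.and ((integral_eq_zero_iff_of_nonneg_ae hf0 hfi).mp h.symm)).exists
  exact hpos.ne' hzero

lemma inv_integral_lt_integral_inv [IsProbabilityMeasure μ] (hf : ∀ᵐ ω ∂μ, 0 < f ω)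
    (hfi : Integrable f μ) (hfi_inv : Integrable (fun ω => (f ω)⁻¹) μ)
    (hnd : ¬ ∃ c : ℝ, f =ᵐ[μ] fun _ => c) :
    (∫ ω, f ω ∂μ)⁻¹ < ∫ ω, (f ω)⁻¹ ∂μ := by
  set m := ∫ ω, f ω ∂μ
  have hm : 0 < m := integral_pos_of_ae_pos hf hfi
  set gap : Ω → ℝ := fun ω => (f ω)⁻¹ - (2 / m - f ω / m ^ 2)
  have hgap_eq : ∀ᵐ ω ∂μ, gap ω = (f ω - m) ^ 2 / (m ^ 2 * f ω) :=
    hf.mono fun ω h => inv_sub_tangent_eq _ _ h.ne' hm.ne'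
  have hgap_nonneg : 0 ≤ᵐ[μ] gap := by
    filter_upwards [hf, hgap_eq] with ω h h_eq
    rw [Pi.zero_apply, h_eq]
    positivity
  have htangent_int : Integrable (fun ω => 2 / m - f ω / m ^ 2) μ :=
    (integrable_const _).sub (hfi.div_const _)
  have hgap_int : Integrable gap μ := hfi_inv.sub htangent_int
  have hgap_integral : ∫ ω, gap ω ∂μ = ∫ ω, (f ω)⁻¹ ∂μ - m⁻¹ := by
    rw [integral_sub hfi_inv htangent_int, integral_sub (integrable_const _) (hfi.div_const _),
      integral_const, integral_div]
    simp only [probReal_univ, one_smul]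
    field_simp
    ring
  suffices 0 < ∫ ω, gap ω ∂μ by linarith
  refine (integral_nonneg_of_ae hgap_nonneg).lt_of_ne fun h => hnd ⟨m, ?_⟩
  filter_upwards [hf, hgap_eq, (integral_eq_zero_iff_of_nonneg_ae hgap_nonneg hgap_int).mp h.symm]
    with ω hpos h_eq h_zero
  rw [h_zero, Pi.zero_apply, eq_comm, div_eq_zero_iff] at h_eq
  rcases h_eq with h_sq | h_den
  · exact sub_eq_zero.mp (pow_eq_zero_iff two_ne_zero |>.mp h_sq)
  · exact absurd h_den (by positivity)

end StrictJensen

theorem stmt_6 {Ω : Type*} [MeasurableSpace Ω] (μ : Measure Ω) [IsProbabilityMeasure μ]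
    (p : Ω → ℝ)
    (hp : ∀ᵐ ω ∂μ, 0 < p ω ∧ p ω < 1)
    (hnd : ¬ ∃ c : ℝ, p =ᵐ[μ] fun _ => c)
    (hpint : Integrable p μ)
    (hinv : Integrable (fun ω => (p ω)⁻¹) μ)
    (hρ : ∫ ω, (1 - p ω) / p ω ∂μ < 1) :
    0 < (1 - ∫ ω, (1 - p ω) / p ω ∂μ) / (1 + ∫ ω, (1 - p ω) / p ω ∂μ) ∧
    (1 - ∫ ω, (1 - p ω) / p ω ∂μ) / (1 + ∫ ω, (1 - p ω) / p ω ∂μ)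
      < 2 * ∫ ω, p ω ∂μ - 1 := by
  have hpos : ∀ᵐ ω ∂μ, 0 < p ω := hp.mono fun _ h => h.1
  have hρ_eq : ∫ ω, (1 - p ω) / p ω ∂μ = ∫ ω, (p ω)⁻¹ ∂μ - 1 := by
    rw [integral_congr_ae (g := fun ω => (p ω)⁻¹ - 1) (hpos.mono fun ω h => by field_simp),
      integral_sub hinv (integrable_const 1), integral_const, probReal_univ, one_smul]
  have hm : 0 < ∫ ω, p ω ∂μ := integral_pos_of_ae_pos hpos hpint
  have hjensen := inv_integral_lt_integral_inv hpos hpint hinv hnd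
  have hI : 0 < ∫ ω, (p ω)⁻¹ ∂μ := (inv_pos.mpr hm).trans hjensen
  rw [inv_lt_iff_one_lt_mul₀' hm] at hjensen
  rw [hρ_eq] at hρ ⊢
  refine ⟨div_pos (by linarith) (by linarith), ?_⟩
  rw [div_lt_iff₀ (by linarith)]
  nlinarith
end

section
/- There exists a distribution of p₀ taking two values β, γ ∈ (0,1) with probabilities α and 1-α such that E[p₀ - q₀] > 0 while E[log((1-p₀)/p₀)] > 0. Specifically, for any α > 1/2 and β with 1/(2α) < β < 1, there exists γ₀ > 0 such that for all 0 < γ < γ₀, taking P{p₀ = β} = α, P{p₀ = γ} = 1-α gives 2E[p₀] - 1 > 0 and α·log((1-β)/β) + (1-α)·log((1-γ)/γ) > 0. -/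
/-!
The drift `2(αβ + (1-α)γ) - 1` exceeds `2αβ - 1 > 0` for every `γ > 0`, while the log-odds
`log((1-γ)/γ)` of the small value `γ` tend to `+∞` as `γ → 0⁺`, so the weighted sum
`α log((1-β)/β) + (1-α) log((1-γ)/γ)` is eventually positive however negative its first term is.
-/

open Filter Topology

theorem Real.tendsto_log_one_sub_div_self_nhdsGT_zero :
    Tendsto (fun γ : ℝ => Real.log ((1 - γ) / γ)) (𝓝[>] 0) atTop := by
  have hodds : Tendsto (fun γ : ℝ => γ⁻¹ - 1) (𝓝[>] 0) atTop :=
    tendsto_atTop_add_const_right _ (-1) tendsto_inv_nhdsGT_zero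
  refine Real.tendsto_log_atTop.comp (hodds.congr' ?_)
  filter_upwards [self_mem_nhdsWithin] with γ (hγ : 0 < γ)
  simp only [sub_div, div_self hγ.ne', one_div]

theorem stmt_7_general (α β : ℝ) (hα : 1 / 2 < α) (hα1 : α < 1)
    (hβ : 1 / (2 * α) < β) :
    ∃ γ₀ > 0, ∀ γ : ℝ, 0 < γ → γ < γ₀ →
      0 < 2 * (α * β + (1 - α) * γ) - 1 ∧
      0 < α * Real.log ((1 - β) / β) + (1 - α) * Real.log ((1 - γ) / γ) := by
  have hα1' : 0 < 1 - α := by linarith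
  have hdrift : 1 < 2 * α * β := by
    rwa [div_lt_iff₀ (by linarith), mul_comm] at hβ
  have hlog : ∀ᶠ γ in 𝓝[>] 0,
      -(α * Real.log ((1 - β) / β)) / (1 - α) < Real.log ((1 - γ) / γ) :=
    Real.tendsto_log_one_sub_div_self_nhdsGT_zero.eventually_gt_atTop _
  obtain ⟨γ₀, hγ₀, hsub⟩ := mem_nhdsGT_iff_exists_Ioo_subset.mp hlog
  refine ⟨γ₀, hγ₀, fun γ hγ hγγ₀ => ⟨by nlinarith, ?_⟩⟩
  have hγ : -(α * Real.log ((1 - β) / β)) < (1 - α) * Real.log ((1 - γ) / γ) :=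
    (div_lt_iff₀' hα1').mp (hsub ⟨hγ, hγγ₀⟩)
  linarith

theorem stmt_7 (α β : ℝ) (hα : 1 / 2 < α) (hα1 : α < 1)
    (hβ : 1 / (2 * α) < β) (hβ1 : β < 1) :
    ∃ γ₀ > 0, ∀ γ : ℝ, 0 < γ → γ < γ₀ →
      0 < 2 * (α * β + (1 - α) * γ) - 1 ∧
      0 < α * Real.log ((1 - β) / β) + (1 - α) * Real.log ((1 - γ) / γ) :=
  stmt_7_general α β hα hα1 hβ
end
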